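/- arXiv:2203.02525 — 2 statements merged into one kernel-verified Lean document; each statement's English description precedes it below -/
import Mathlib

section
/- Let P in M_d(ℂ) satisfy ‖P‖_op ≤ C₀, ‖P - P*‖_f ≤ ε, and ‖P² - P‖_f ≤ ε for some 0 < ε ≤ 1. Then there exists an orthogonal projection P̃ (P̃² = P̃ = P̃*) and a constant C' depending only on C₀ such that ‖P - P̃‖_f ≤ C'·ε. -/
open Matrix

noncomputable def littleFrob {d : ℕ} (A : Matrix (Fin d) (Fin d) ℂ) : ℝ :=
  Real.sqrt ((Aᴴ * A).trace.re / d)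

noncomputable def matOpNorm {d : ℕ} (A : Matrix (Fin d) (Fin d) ℂ) : ℝ :=
  ‖Matrix.toEuclideanCLM (𝕜 := ℂ) (n := Fin d) A‖

/-!
The Hermitian part `A = ℜ P` is `ε/2`-close to `P`, and the identity
`A² - A = A (A - P) + (A - P) P + (P² - P) + (P - A)` shows that it is an `O(ε)`-approximate
idempotent. Rounding the spectrum of `A` to the nearer of `0` and `1` gives a projection `Q`
with `A - Q = g(A) (A² - A)` for a function `|g| ≤ 2`, so `‖A - Q‖_f ≤ 2 ‖A² - A‖_f`.
All products are estimated by `‖X Y‖_f ≤ ‖X‖_op ‖Y‖_f`, which keeps the constants independent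
of the dimension.
-/

open scoped ComplexStarModule

lemma IsSelfAdjoint.exists_isStarProjection_sub_eq_mul {A : Type*} [CStarAlgebra A] {a : A}
    (ha : IsSelfAdjoint a) (hσ : (spectrum ℝ a).Finite) :
    ∃ q g : A, IsStarProjection q ∧ a - q = g * (a * a - a) ∧ ‖g‖ ≤ 2 := by
  -- `χ` rounds to the nearer of `0` and `1`; `g x * (x * x - x) = x - χ x` and `|g| ≤ 2`.
  let χ : ℝ → ℝ := fun x => if x < 1 / 2 then 0 else 1
  let g : ℝ → ℝ := fun x => if x < 1 / 2 then (x - 1)⁻¹ else x⁻¹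
  have hχ : ContinuousOn χ (spectrum ℝ a) := hσ.continuousOn χ
  have hg : ContinuousOn g (spectrum ℝ a) := hσ.continuousOn g
  refine ⟨cfc χ a, cfc g a, ⟨?_, cfc_predicate χ a⟩, ?_, norm_cfc_le zero_le_two fun x _ => ?_⟩
  · rw [IsIdempotentElem, ← cfc_mul χ χ a]
    congr! 2 with x
    simp only [χ]
    split_ifs <;> norm_num
  · have hpoly : cfc (fun x : ℝ => x * x - x) a = a * a - a := by
      rw [cfc_sub (fun x : ℝ => x * x) (fun x => x) a, cfc_mul (fun x : ℝ => x) (fun x => x) a,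
        cfc_id' ℝ a]
    calc a - cfc χ a = cfc (fun x => x - χ x) a := by rw [cfc_sub (fun x => x) χ a, cfc_id' ℝ a]
      _ = cfc (fun x => g x * (x * x - x)) a := by
        congr! 2 with x
        simp only [χ, g]
        split_ifs with h
        · field_simp [show x - 1 ≠ 0 by linarith]
          ring
        · field_simp [show x ≠ 0 by linarith]
      _ = cfc g a * (a * a - a) := by rw [cfc_mul g _ a, hpoly]
  · simp only [g, Real.norm_eq_abs]
    split_ifs with h
    · exact abs_inv (x - 1) ▸
        inv_le_of_inv_le₀ two_pos (by rw [abs_of_neg (by linarith)]; linarith)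
    · exact abs_inv x ▸ inv_le_of_inv_le₀ two_pos (by rw [abs_of_pos (by linarith)]; linarith)

lemma norm_realPart_le {E : Type*} [NormedAddCommGroup E] [NormedSpace ℂ E] [StarAddMonoid E]
    [StarModule ℂ E] [NormedStarGroup E] (a : E) : ‖(ℜ a : E)‖ ≤ ‖a‖ := by
  rw [realPart_apply_coe, norm_smul]
  calc ‖(2 : ℝ)⁻¹‖ * ‖a + star a‖ ≤ 2⁻¹ * (‖a‖ + ‖star a‖) := by
        rw [Real.norm_of_nonneg (by norm_num)]
        gcongr
        exact norm_add_le _ _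
    _ = ‖a‖ := by rw [norm_star]; ring

namespace Matrix

section L2Operator

open scoped Matrix.Norms.L2Operator

variable {n : Type*} [Fintype n] [DecidableEq n]

lemma IsHermitian.exists_isStarProjection_sub_eq_mul {A : Matrix n n ℂ} (hA : A.IsHermitian) :
    ∃ Q G : Matrix n n ℂ, IsStarProjection Q ∧ A - Q = G * (A * A - A) ∧
      ‖toEuclideanCLM (n := n) (𝕜 := ℂ) G‖ ≤ 2 :=
  hA.isSelfAdjoint.exists_isStarProjection_sub_eq_mul A.finite_real_spectrum

lemma norm_toEuclideanCLM_realPart_le (P : Matrix n n ℂ) :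
    ‖toEuclideanCLM (n := n) (𝕜 := ℂ) (ℜ P : Matrix n n ℂ)‖ ≤
      ‖toEuclideanCLM (n := n) (𝕜 := ℂ) P‖ :=
  norm_realPart_le P

end L2Operator

lemma norm_toEuclideanCLM_conjTranspose {𝕜 n : Type*} [RCLike 𝕜] [Fintype n] [DecidableEq n]
    (X : Matrix n n 𝕜) :
    ‖toEuclideanCLM (n := n) (𝕜 := 𝕜) Xᴴ‖ = ‖toEuclideanCLM (n := n) (𝕜 := 𝕜) X‖ := by
  rw [← star_eq_conjTranspose, map_star, ContinuousLinearMap.star_eq_adjoint,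
    LinearIsometryEquiv.norm_map]

section Frobenius

attribute [local instance] frobeniusNormedAddCommGroup frobeniusNormedSpace

variable {𝕜 m n : Type*} [RCLike 𝕜] [Fintype m] [Fintype n]

lemma frobenius_norm_sq_eq_sum_norm_sq_row (A : Matrix m n 𝕜) :
    ‖A‖ ^ 2 = ∑ i, ‖WithLp.toLp 2 (A i)‖ ^ 2 := by
  change ‖WithLp.toLp 2 fun i => WithLp.toLp 2 (A i)‖ ^ 2 = _
  exact PiLp.norm_sq_eq_of_L2 _ _

lemma frobenius_norm_sq_eq_re_trace (A : Matrix m n 𝕜) :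
    ‖A‖ ^ 2 = RCLike.re (Aᴴ * A).trace := by
  simp only [frobenius_norm_sq_eq_sum_norm_sq_row, EuclideanSpace.norm_sq_eq, trace, diag_apply,
    mul_apply, conjTranspose_apply, RCLike.star_def, RCLike.conj_mul, map_sum,
    ← RCLike.ofReal_pow, RCLike.ofReal_re]
  exact Finset.sum_comm

lemma frobenius_norm_sub_realPart (P : Matrix n n ℂ) : ‖P - ℜ P‖ = ‖P - Pᴴ‖ / 2 := by
  rw [realPart_apply_coe, show P - (2 : ℝ)⁻¹ • (P + star P) = (2 : ℝ)⁻¹ • (P - Pᴴ) by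
    rw [star_eq_conjTranspose]; module, norm_smul, Real.norm_of_nonneg (by norm_num)]
  ring

variable [DecidableEq n]

-- The columns of `X * Y` are the images under `X` of the columns of `Y`.
lemma frobenius_norm_mul_le_opNorm_mul (X : Matrix n n 𝕜) (Y : Matrix n m 𝕜) :
    ‖X * Y‖ ≤ ‖toEuclideanCLM (n := n) (𝕜 := 𝕜) X‖ * ‖Y‖ := by
  rw [← frobenius_norm_transpose (X * Y), ← frobenius_norm_transpose Y]
  refine (sq_le_sq₀ (norm_nonneg _) (by positivity)).1 ?_
  rw [mul_pow, frobenius_norm_sq_eq_sum_norm_sq_row, frobenius_norm_sq_eq_sum_norm_sq_row,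
    Finset.mul_sum]
  gcongr with j
  rw [← mul_pow]
  exact pow_le_pow_left₀ (norm_nonneg _)
    ((toEuclideanCLM (n := n) (𝕜 := 𝕜) X).le_opNorm (WithLp.toLp 2 (Yᵀ j))) 2

lemma frobenius_norm_mul_le_mul_opNorm (Y : Matrix m n 𝕜) (X : Matrix n n 𝕜) :
    ‖Y * X‖ ≤ ‖Y‖ * ‖toEuclideanCLM (n := n) (𝕜 := 𝕜) X‖ := by
  rw [← frobenius_norm_conjTranspose, conjTranspose_mul, mul_comm,
    ← frobenius_norm_conjTranspose Y, ← norm_toEuclideanCLM_conjTranspose X]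
  exact frobenius_norm_mul_le_opNorm_mul _ _

theorem exists_isStarProjection_frobenius_norm_sub_le (P : Matrix n n ℂ) :
    ∃ Q : Matrix n n ℂ, IsStarProjection Q ∧
      ‖P - Q‖ ≤ (2 * ‖toEuclideanCLM (n := n) (𝕜 := ℂ) P‖ + 3 / 2) * ‖P - Pᴴ‖ +
        2 * ‖P * P - P‖ := by
  obtain ⟨Q, G, hQ, hAQ, hG⟩ := IsHermitian.exists_isStarProjection_sub_eq_mul (ℜ P).2
  set A : Matrix n n ℂ := ↑(ℜ P)
  set T := toEuclideanCLM (n := n) (𝕜 := ℂ)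
  refine ⟨Q, hQ, ?_⟩
  have hPA : ‖P - A‖ = ‖P - Pᴴ‖ / 2 := frobenius_norm_sub_realPart P
  have hA2 : ‖A * A - A‖ ≤ (‖T P‖ + 1 / 2) * ‖P - Pᴴ‖ + ‖P * P - P‖ :=
    calc ‖A * A - A‖ = ‖A * (A - P) + (A - P) * P + (P * P - P) + (P - A)‖ := by
          congr 1; noncomm_ring
      _ ≤ ‖T A‖ * ‖A - P‖ + ‖A - P‖ * ‖T P‖ + ‖P * P - P‖ + ‖P - A‖ := by
          refine (norm_add₄_le ..).trans ?_
          gcongr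
          · exact frobenius_norm_mul_le_opNorm_mul _ _
          · exact frobenius_norm_mul_le_mul_opNorm _ _
      _ ≤ ‖T P‖ * ‖P - A‖ + ‖P - A‖ * ‖T P‖ + ‖P * P - P‖ + ‖P - A‖ := by
          rw [norm_sub_rev A P]
          gcongr
          exact norm_toEuclideanCLM_realPart_le P
      _ = (‖T P‖ + 1 / 2) * ‖P - Pᴴ‖ + ‖P * P - P‖ := by rw [hPA]; ring
  calc ‖P - Q‖ = ‖(P - A) + G * (A * A - A)‖ := by rw [← hAQ, sub_add_sub_cancel]
    _ ≤ ‖P - A‖ + ‖T G‖ * ‖A * A - A‖ :=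
      (norm_add_le _ _).trans (by gcongr; exact frobenius_norm_mul_le_opNorm_mul _ _)
    _ ≤ ‖P - Pᴴ‖ / 2 + 2 * ((‖T P‖ + 1 / 2) * ‖P - Pᴴ‖ + ‖P * P - P‖) := by rw [hPA]; gcongr
    _ = (2 * ‖T P‖ + 3 / 2) * ‖P - Pᴴ‖ + 2 * ‖P * P - P‖ := by ring

end Frobenius

end Matrix

section LittleFrobenius

attribute [local instance] Matrix.frobeniusNormedAddCommGroup

variable {d : ℕ}

lemma littleFrob_eq_frobenius_norm_div_sqrt (A : Matrix (Fin d) (Fin d) ℂ) :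
    littleFrob A = ‖A‖ / √d := by
  rw [littleFrob, Real.sqrt_div' _ d.cast_nonneg, ← Real.sqrt_sq (norm_nonneg A),
    Matrix.frobenius_norm_sq_eq_re_trace]
  rfl

theorem exists_isStarProjection_littleFrob_sub_le (P : Matrix (Fin d) (Fin d) ℂ) :
    ∃ Q : Matrix (Fin d) (Fin d) ℂ, IsStarProjection Q ∧
      littleFrob (P - Q) ≤
        (2 * matOpNorm P + 3 / 2) * littleFrob (P - Pᴴ) + 2 * littleFrob (P * P - P) := by
  obtain ⟨Q, hQ, hPQ⟩ := Matrix.exists_isStarProjection_frobenius_norm_sub_le P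
  refine ⟨Q, hQ, ?_⟩
  simp only [littleFrob_eq_frobenius_norm_div_sqrt]
  calc ‖P - Q‖ / √d ≤ ((2 * matOpNorm P + 3 / 2) * ‖P - Pᴴ‖ + 2 * ‖P * P - P‖) / √d := by
        gcongr; exact hPQ
    _ = _ := by ring

end LittleFrobenius

/-- Approximate projections in the little Frobenius norm are close to exact orthogonal
projections, with a constant depending only on the operator norm bound `C₀`. -/
theorem stmt4 (C₀ : ℝ) :
    ∃ C' : ℝ, ∀ (d : ℕ) (P : Matrix (Fin d) (Fin d) ℂ) (ε : ℝ),
      0 < ε → ε ≤ 1 →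
      matOpNorm P ≤ C₀ →
      littleFrob (P - Pᴴ) ≤ ε →
      littleFrob (P * P - P) ≤ ε →
      ∃ Q : Matrix (Fin d) (Fin d) ℂ, Q * Q = Q ∧ Qᴴ = Q ∧
        littleFrob (P - Q) ≤ C' * ε := by
  refine ⟨2 * C₀ + 7 / 2, fun d P ε _ _ hP h₁ h₂ => ?_⟩
  obtain ⟨Q, hQ, hPQ⟩ := exists_isStarProjection_littleFrob_sub_le P
  refine ⟨Q, hQ.isIdempotentElem.eq, hQ.isSelfAdjoint.star_eq, hPQ.trans ?_⟩
  have hC₀ : 0 ≤ 2 * C₀ + 3 / 2 := by linarith [(norm_nonneg _ : 0 ≤ matOpNorm P).trans hP]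
  calc (2 * matOpNorm P + 3 / 2) * littleFrob (P - Pᴴ) + 2 * littleFrob (P * P - P)
      ≤ (2 * C₀ + 3 / 2) * ε + 2 * ε := by
        gcongr
        exact Real.sqrt_nonneg _
    _ = (2 * C₀ + 7 / 2) * ε := by ring
end

section
/- Let X be a self-adjoint unitary on a finite-dimensional Hilbert space H and let P be an orthogonal projection on H with ‖XP − PX‖_F ≤ δ. Then ‖(PXP)² − P‖_F ≤ δ, and consequently (writing PXP = W|PXP| for its polar decomposition restricted to Im(P)) there exists a unitary X̃ on Im(P) with ‖X̃ − PXP‖_F ≤ δ and ‖X̃ − XP‖_F ≤ 2δ. -/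
/-!
Since `X² = 1`, `(PXP)² − P = P·X(PX − XP)·P`, and neither compressing by `P` nor multiplying by
the unitary `X` increases the Hilbert–Schmidt norm.

For the unitary take `S = sign(PXP)` and `X̃ = P + S − S²`, i.e. `S` completed by the identity on
the part of `Im P` killed by `PXP`; then `X̃` is self-adjoint with `X̃² = P`. Both
`X̃ − PXP = (P − S²) + (S − PXP)` and `(PXP)² − P = −(P − S²) + ((PXP)² − S²)` are orthogonal
sums, and `|sign λ − λ| ≤ |λ² − sign² λ|`, so `‖X̃ − PXP‖ ≤ ‖(PXP)² − P‖`. Finally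
`PXP − XP = −(1 − P)(XP − PX)`.
-/

open Matrix

/-- The (unnormalized) Frobenius / Hilbert–Schmidt norm of a matrix. -/
noncomputable def frobNorm {d : ℕ} (A : Matrix (Fin d) (Fin d) ℂ) : ℝ :=
  Real.sqrt ((Aᴴ * A).trace.re)

lemma IsIdempotentElem.add_sub_mul_self_mul_self_eq {R : Type*} [Ring R] {P S : R}
    (hP : IsIdempotentElem P) (hPS : P * S = S) (hSP : S * P = S) (hS : S * S * S = S) :
    (P + S - S * S) * (P + S - S * S) = P := by
  have hPSS : P * (S * S) = S * S := by rw [← mul_assoc, hPS]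
  rw [mul_assoc] at hS
  simp only [add_mul, mul_add, sub_mul, mul_sub, mul_assoc, hP.eq, hPS, hSP, hPSS, hS]
  abel

lemma Real.abs_sign_sub_le (x : ℝ) :
    |Real.sign x - x| ≤ |x * x - Real.sign x * Real.sign x| := by
  rcases lt_trichotomy x 0 with hx | rfl | hx
  · rw [Real.sign_of_neg hx, show x * x - -1 * -1 = (-1 - x) * (1 - x) by ring, abs_mul]
    exact le_mul_of_one_le_right (abs_nonneg _) (by rw [abs_of_pos (by linarith)]; linarith)
  · simp
  · rw [Real.sign_of_pos hx, show x * x - 1 * 1 = (1 - x) * -(x + 1) by ring, abs_mul]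
    exact le_mul_of_one_le_right (abs_nonneg _)
      (by rw [abs_neg, abs_of_pos (by linarith)]; linarith)

section FrobNorm

variable {d : ℕ}

lemma re_trace_conjTranspose_mul_self (A : Matrix (Fin d) (Fin d) ℂ) :
    (Aᴴ * A).trace.re = ∑ i, ∑ j, ‖A i j‖ ^ 2 := by
  simp only [trace, diag, mul_apply, conjTranspose_apply, RCLike.star_def, RCLike.conj_mul,
    Complex.re_sum]
  rw [Finset.sum_comm]
  norm_cast

lemma frobNorm_sq (A : Matrix (Fin d) (Fin d) ℂ) : frobNorm A ^ 2 = (Aᴴ * A).trace.re := by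
  rw [frobNorm, Real.sq_sqrt (by rw [re_trace_conjTranspose_mul_self]; positivity)]

lemma frobNorm_nonneg (A : Matrix (Fin d) (Fin d) ℂ) : 0 ≤ frobNorm A :=
  Real.sqrt_nonneg _

section FrobeniusNorm

attribute [local instance] frobeniusNormedAddCommGroup

lemma frobNorm_eq_norm (A : Matrix (Fin d) (Fin d) ℂ) : frobNorm A = ‖A‖ := by
  rw [frobNorm, re_trace_conjTranspose_mul_self, frobenius_norm_def, Real.sqrt_eq_rpow]
  simp only [Real.rpow_two]

lemma frobNorm_add_le (A B : Matrix (Fin d) (Fin d) ℂ) :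
    frobNorm (A + B) ≤ frobNorm A + frobNorm B := by
  simpa only [frobNorm_eq_norm] using norm_add_le A B

lemma frobNorm_neg (A : Matrix (Fin d) (Fin d) ℂ) : frobNorm (-A) = frobNorm A := by
  simp only [frobNorm_eq_norm, norm_neg]

lemma frobNorm_conjTranspose (A : Matrix (Fin d) (Fin d) ℂ) : frobNorm Aᴴ = frobNorm A := by
  simp only [frobNorm_eq_norm, frobenius_norm_conjTranspose]

lemma frobNorm_diagonal_le {v w : Fin d → ℂ} (h : ∀ i, ‖v i‖ ≤ ‖w i‖) :
    frobNorm (diagonal v) ≤ frobNorm (diagonal w) := by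
  simp only [frobNorm_eq_norm, frobenius_norm_diagonal, EuclideanSpace.norm_eq]
  gcongr with i
  exact h i

end FrobeniusNorm

lemma frobNorm_unitary_mul {U : Matrix (Fin d) (Fin d) ℂ} (hU : Uᴴ * U = 1)
    (A : Matrix (Fin d) (Fin d) ℂ) : frobNorm (U * A) = frobNorm A := by
  rw [frobNorm, frobNorm, conjTranspose_mul, Matrix.mul_assoc, ← Matrix.mul_assoc Uᴴ, hU,
    Matrix.one_mul]

lemma frobNorm_mul_unitary {U : Matrix (Fin d) (Fin d) ℂ} (hU : U * Uᴴ = 1)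
    (A : Matrix (Fin d) (Fin d) ℂ) : frobNorm (A * U) = frobNorm A := by
  rw [frobNorm, frobNorm, conjTranspose_mul, Matrix.mul_assoc, trace_mul_comm, Matrix.mul_assoc,
    Matrix.mul_assoc, hU, Matrix.mul_one]

lemma frobNorm_add_sq_of_conjTranspose_mul_eq_zero {A B : Matrix (Fin d) (Fin d) ℂ}
    (h : Aᴴ * B = 0) : frobNorm (A + B) ^ 2 = frobNorm A ^ 2 + frobNorm B ^ 2 := by
  have h' : Bᴴ * A = 0 := by rw [← conjTranspose_conjTranspose A, ← conjTranspose_mul, h,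
    conjTranspose_zero]
  simp only [frobNorm_sq, conjTranspose_add, Matrix.add_mul, Matrix.mul_add, h, h', trace_add,
    Complex.add_re, trace_zero, Complex.zero_re]
  ring

lemma frobNorm_proj_mul_le {P : Matrix (Fin d) (Fin d) ℂ} (hP : IsIdempotentElem P)
    (hPsa : Pᴴ = P) (A : Matrix (Fin d) (Fin d) ℂ) : frobNorm (P * A) ≤ frobNorm A := by
  have horth : (P * A)ᴴ * ((1 - P) * A) = 0 := by
    rw [conjTranspose_mul, hPsa, Matrix.mul_assoc, ← Matrix.mul_assoc P, Matrix.mul_sub, hP.eq,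
      Matrix.mul_one, sub_self, Matrix.zero_mul, Matrix.mul_zero]
  have hsplit := frobNorm_add_sq_of_conjTranspose_mul_eq_zero horth
  rw [← Matrix.add_mul, add_sub_cancel, Matrix.one_mul] at hsplit
  exact le_of_sq_le_sq (by nlinarith [sq_nonneg (frobNorm ((1 - P) * A))]) (frobNorm_nonneg A)

lemma frobNorm_mul_proj_le {P : Matrix (Fin d) (Fin d) ℂ} (hP : IsIdempotentElem P)
    (hPsa : Pᴴ = P) (A : Matrix (Fin d) (Fin d) ℂ) : frobNorm (A * P) ≤ frobNorm A := by
  rw [← frobNorm_conjTranspose, conjTranspose_mul, hPsa, ← frobNorm_conjTranspose A]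
  exact frobNorm_proj_mul_le hP hPsa Aᴴ

end FrobNorm

namespace Matrix

variable {n 𝕜 : Type*} [RCLike 𝕜] [Fintype n] [DecidableEq n]

lemma continuousOn_spectrum_real (A : Matrix n n 𝕜) (f : ℝ → ℝ) :
    ContinuousOn f (spectrum ℝ A) :=
  A.finite_real_spectrum.continuousOn f

lemma cfc_sign_mul_self_mul_self (A : Matrix n n 𝕜) :
    cfc Real.sign A * cfc Real.sign A * cfc Real.sign A = cfc Real.sign A := by
  have hc := continuousOn_spectrum_real A
  rw [← cfc_mul _ _ A (hc _) (hc _), ← cfc_mul _ _ A (hc _) (hc _)]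
  congr 1
  ext x
  rcases lt_trichotomy x 0 with hx | rfl | hx <;> simp [Real.sign_of_neg, Real.sign_of_pos, *]

lemma cfc_sign_mul_self_mul {A : Matrix n n 𝕜} (hA : A.IsHermitian) :
    cfc Real.sign A * cfc Real.sign A * A = A := by
  have hc := continuousOn_spectrum_real A
  calc cfc Real.sign A * cfc Real.sign A * A
      = cfc (fun x => Real.sign x * Real.sign x * x) A := by
        rw [cfc_mul _ _ A (hc _) (hc _), cfc_mul _ _ A (hc _) (hc _), cfc_id' ℝ A hA.isSelfAdjoint]
    _ = cfc (fun x => x) A := by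
        congr 1
        ext x
        rcases lt_trichotomy x 0 with hx | rfl | hx <;> simp [Real.sign_of_neg, Real.sign_of_pos, *]
    _ = A := cfc_id' ℝ A hA.isSelfAdjoint

lemma cfc_sign_eq_mul {A : Matrix n n 𝕜} (hA : A.IsHermitian) :
    cfc Real.sign A = A * cfc (fun x : ℝ => |x|⁻¹) A := by
  have hc := continuousOn_spectrum_real A
  calc cfc Real.sign A = cfc (fun x : ℝ => x * |x|⁻¹) A := by
        congr 1
        ext x
        rcases lt_trichotomy x 0 with hx | rfl | hx
        · rw [Real.sign_of_neg hx, abs_of_neg hx]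
          field_simp [hx.ne]
        · simp
        · rw [Real.sign_of_pos hx, abs_of_pos hx, mul_inv_cancel₀ hx.ne']
    _ = A * cfc (fun x : ℝ => |x|⁻¹) A := by
        rw [cfc_mul _ _ A (hc _) (hc _), cfc_id' ℝ A hA.isSelfAdjoint]

variable {P A : Matrix n n 𝕜}

lemma mul_cfc_sign_of_mul_eq (hA : A.IsHermitian) (hPA : P * A = A) :
    P * cfc Real.sign A = cfc Real.sign A := by
  rw [cfc_sign_eq_mul hA, ← Matrix.mul_assoc, hPA]

lemma cfc_sign_mul_of_mul_eq (hA : A.IsHermitian) (hAP : A * P = A) :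
    cfc Real.sign A * P = cfc Real.sign A := by
  rw [cfc_sign_eq_mul hA, ← (Commute.cfc_real (Commute.refl A) _).eq, Matrix.mul_assoc, hAP]

noncomputable def completedSign (P A : Matrix n n 𝕜) : Matrix n n 𝕜 :=
  P + cfc Real.sign A - cfc Real.sign A * cfc Real.sign A

lemma isHermitian_completedSign (hP : P.IsHermitian) : (completedSign P A).IsHermitian := by
  have hS : IsSelfAdjoint (cfc Real.sign A) := IsSelfAdjoint.cfc
  have hSS : IsSelfAdjoint (cfc Real.sign A * cfc Real.sign A) := by
    simpa only [hS.star_eq] using IsSelfAdjoint.star_mul_self (cfc Real.sign A)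
  exact (hP.isSelfAdjoint.add hS).sub hSS

lemma completedSign_mul_self (hA : A.IsHermitian) (hP : IsIdempotentElem P) (hPA : P * A = A)
    (hAP : A * P = A) : completedSign P A * completedSign P A = P :=
  hP.add_sub_mul_self_mul_self_eq (mul_cfc_sign_of_mul_eq hA hPA) (cfc_sign_mul_of_mul_eq hA hAP)
    (cfc_sign_mul_self_mul_self A)

end Matrix

section FrobNormEstimates

variable {d : ℕ}

lemma frobNorm_cfc_le {A : Matrix (Fin d) (Fin d) ℂ} (hA : A.IsHermitian) {f g : ℝ → ℝ}
    (h : ∀ x, |f x| ≤ |g x|) : frobNorm (cfc f A) ≤ frobNorm (cfc g A) := by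
  have hU : (hA.eigenvectorUnitary : Matrix (Fin d) (Fin d) ℂ)ᴴ * hA.eigenvectorUnitary = 1 :=
    mem_unitaryGroup_iff'.mp hA.eigenvectorUnitary.2
  simp only [hA.cfc_eq, IsHermitian.cfc, Unitary.conjStarAlgAut_apply, star_eq_conjTranspose,
    frobNorm_unitary_mul hU, frobNorm_mul_unitary (by rwa [conjTranspose_conjTranspose])]
  refine frobNorm_diagonal_le fun i => ?_
  simpa using h (hA.eigenvalues i)

lemma frobNorm_completedSign_sub_le {P A : Matrix (Fin d) (Fin d) ℂ} (hA : A.IsHermitian)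
    (hPsa : Pᴴ = P) (hPA : P * A = A) :
    frobNorm (completedSign P A - A) ≤ frobNorm (A * A - P) := by
  have hc := continuousOn_spectrum_real A
  have hS3 := cfc_sign_mul_self_mul_self A
  have hSSA := cfc_sign_mul_self_mul hA
  have hPS := mul_cfc_sign_of_mul_eq hA hPA
  have hSsa : (cfc Real.sign A)ᴴ = cfc Real.sign A := IsSelfAdjoint.cfc
  set S := cfc Real.sign A
  set E := P - S * S with hE
  have hEsa : Eᴴ = E := by rw [hE, conjTranspose_sub, conjTranspose_mul, hSsa, hPsa]
  have hES : E * S = 0 := by rw [hE, Matrix.sub_mul, hPS, hS3, sub_self]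
  have hEA : E * A = 0 := by rw [hE, Matrix.sub_mul, hPA, hSSA, sub_self]
  have hsign : frobNorm (completedSign P A - A) ^ 2 = frobNorm E ^ 2 + frobNorm (S - A) ^ 2 := by
    rw [← frobNorm_add_sq_of_conjTranspose_mul_eq_zero (by rw [hEsa, Matrix.mul_sub, hES, hEA,
      sub_zero])]
    congr 1
    simp only [completedSign, hE, S]
    abel_nf
  have hsq : frobNorm (A * A - P) ^ 2 = frobNorm (-E) ^ 2 + frobNorm (A * A - S * S) ^ 2 := by
    rw [← frobNorm_add_sq_of_conjTranspose_mul_eq_zero (by rw [conjTranspose_neg, hEsa,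
      Matrix.neg_mul, Matrix.mul_sub, ← Matrix.mul_assoc, ← Matrix.mul_assoc, hES, hEA,
      Matrix.zero_mul, Matrix.zero_mul, sub_self, neg_zero])]
    congr 1
    simp only [hE]
    abel_nf
  have hcore : frobNorm (S - A) ≤ frobNorm (A * A - S * S) := by
    rw [← cfc_id' ℝ A hA.isSelfAdjoint, ← cfc_mul _ _ A (hc _) (hc _),
      ← cfc_mul _ _ A (hc _) (hc _), ← cfc_sub _ _ A (hc _) (hc _), ← cfc_sub _ _ A (hc _) (hc _)]
    exact frobNorm_cfc_le hA Real.abs_sign_sub_le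
  rw [← pow_le_pow_iff_left₀ (frobNorm_nonneg _) (frobNorm_nonneg _) two_ne_zero, hsign, hsq,
    frobNorm_neg]
  exact add_le_add_right (pow_le_pow_left₀ (frobNorm_nonneg _) hcore 2) _

variable {X P : Matrix (Fin d) (Fin d) ℂ}

lemma frobNorm_compression_mul_self_sub_le (hXsa : Xᴴ = X) (hXu : X * X = 1)
    (hP : IsIdempotentElem P) (hPsa : Pᴴ = P) :
    frobNorm ((P * X * P) * (P * X * P) - P) ≤ frobNorm (X * P - P * X) := by
  have hkey : (P * X * P) * (P * X * P) - P = P * (X * (P * X - X * P)) * P := by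
    have hPP (M : Matrix (Fin d) (Fin d) ℂ) : P * (P * M) = P * M := by
      rw [← Matrix.mul_assoc, hP.eq]
    rw [Matrix.mul_sub, ← Matrix.mul_assoc X X, hXu, Matrix.one_mul, Matrix.mul_sub,
      Matrix.sub_mul, hP.eq]
    simp only [Matrix.mul_assoc, hPP, hP.eq]
  calc frobNorm ((P * X * P) * (P * X * P) - P)
      ≤ frobNorm (P * (X * (P * X - X * P))) := hkey ▸ frobNorm_mul_proj_le hP hPsa _
    _ ≤ frobNorm (X * (P * X - X * P)) := frobNorm_proj_mul_le hP hPsa _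
    _ = frobNorm (X * P - P * X) := by
      rw [frobNorm_unitary_mul (by rw [hXsa, hXu]), ← frobNorm_neg, neg_sub]

lemma frobNorm_compression_sub_le (hP : IsIdempotentElem P) (hPsa : Pᴴ = P) :
    frobNorm (P * X * P - X * P) ≤ frobNorm (X * P - P * X) := by
  have hkey : P * X * P - X * P = -((1 - P) * (X * P - P * X)) := by
    rw [Matrix.mul_sub, Matrix.sub_mul, Matrix.sub_mul, Matrix.one_mul, Matrix.one_mul,
      ← Matrix.mul_assoc P P, hP.eq, ← Matrix.mul_assoc]
    abel
  rw [hkey, frobNorm_neg]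
  exact frobNorm_proj_mul_le hP.one_sub (by rw [conjTranspose_sub, conjTranspose_one, hPsa]) _

end FrobNormEstimates

/-- If `X` is a self-adjoint unitary and `P` a projection with `‖XP − PX‖_F ≤ δ`, then
`‖(PXP)² − P‖_F ≤ δ`, and there exists a unitary `X̃` of `Im(P)` (a matrix with
`X̃*X̃ = X̃X̃* = P`) with `‖X̃ − PXP‖_F ≤ δ` and `‖X̃ − XP‖_F ≤ 2δ`. -/
theorem stmt16 {d : ℕ} (X P : Matrix (Fin d) (Fin d) ℂ) (δ : ℝ)
    (hXsa : Xᴴ = X) (hXu : X * X = 1)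
    (hP : P * P = P) (hPsa : Pᴴ = P)
    (hcomm : frobNorm (X * P - P * X) ≤ δ) :
    frobNorm ((P * X * P) * (P * X * P) - P) ≤ δ ∧
      ∃ Xt : Matrix (Fin d) (Fin d) ℂ,
        Xtᴴ * Xt = P ∧ Xt * Xtᴴ = P ∧
        frobNorm (Xt - P * X * P) ≤ δ ∧ frobNorm (Xt - X * P) ≤ 2 * δ := by
  have hsq := (frobNorm_compression_mul_self_sub_le hXsa hXu hP hPsa).trans hcomm
  set A := P * X * P
  have hA : A.IsHermitian := by
    simp only [IsHermitian, A, conjTranspose_mul, hPsa, hXsa, Matrix.mul_assoc]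
  have hPA : P * A = A := by simp only [A, ← Matrix.mul_assoc, hP]
  have hXt := frobNorm_completedSign_sub_le hA hPsa hPA
  have hXtsq := completedSign_mul_self hA hP hPA (by simp only [A, Matrix.mul_assoc, hP])
  refine ⟨hsq, completedSign P A, ?_, ?_, hXt.trans hsq, ?_⟩
  · rw [isHermitian_completedSign hPsa, hXtsq]
  · rw [isHermitian_completedSign hPsa, hXtsq]
  · calc frobNorm (completedSign P A - X * P)
        ≤ frobNorm (completedSign P A - A) + frobNorm (A - X * P) := by
          simpa only [sub_add_sub_cancel] using frobNorm_add_le (completedSign P A - A) (A - X * P)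
      _ ≤ δ + δ := add_le_add (hXt.trans hsq) ((frobNorm_compression_sub_le hP hPsa).trans hcomm)
      _ = 2 * δ := by ring
end
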